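/- Let θ ∈ (1/2, 1) and B > 0. Suppose δ_i[k] = 1 for all i and all k (every agent active at every index), so c_i[k] := ∑_{ℓ=0}^k δ_i[ℓ] = k+1, and suppose the step-sizes are α_i[k] = B / (k+1)^θ for all i and k. Suppose the gradient bound and the consensus bound hold. Then p̄_i^{(K)} = 1/n for every i and every K ≥ 1, the minimizer x*_K of the reweighted objective equals x*, and there exists a constant A > 0 such that for every integer K ≥ 1, (1/K) ∑_{k=0}^{K−1} ‖x̄[k] − x*‖² ≤ n( ‖x̄[0] − x*‖² + A ) / (2μB K^{1−θ}). -/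

import Mathlib

/-!
With every agent active and the common step `β k = B / (k + 1) ^ θ`, all weights `p̄_i` equal
`1 / n`, so the reweighted objective is `F / n` and its minimizer is `x*` (strong convexity makes
minimizers unique).

For the rate, write `e k = ‖x̄[k] - x*‖²` and `N k = ∑ i, ‖z_i[k] - x̄[k]‖`. Strong monotonicity of
the gradients together with the bound `‖∇f_i(x̄[k])‖ ≤ L` keeps `x̄[k]` in the ball of radius
`L / μ` about `x*`, so evaluating the gradients at `z_i[k]` instead of `x̄[k]` perturbs
`⟪∑ ∇f_i, x̄[k] - x*⟫` by at most `M (L / μ) N k`. This gives the one-step inequality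
`2 μ β_k e_k ≤ e_k - e_{k+1} + 2 M (L / μ) β_k N_k / n + L² β_k²`, which telescopes. The consensus
bound makes `∑ β_k N_k` a geometric convolution of `β` with itself, hence at most a constant plus
`(1 - q)⁻¹ ∑ β_k²`, which is finite because `2 θ > 1`. Finally `β_k ≥ B / K ^ θ` for `k < K`.
-/

open Finset
open scoped RealInnerProductSpace

theorem geom_sum_le_inv_one_sub {q : ℝ} (hq0 : 0 ≤ q) (hq1 : q < 1) (n : ℕ) :
    ∑ i ∈ range n, q ^ i ≤ (1 - q)⁻¹ := by
  simpa using geom_sum_Ico_le_of_lt_one (m := 0) (n := n) hq0 hq1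

theorem sum_range_le_add_sum_of_le_sub_succ {u e D : ℕ → ℝ}
    (h : ∀ k, u k ≤ e k - e (k + 1) + D k) {K : ℕ} (heK : 0 ≤ e K) :
    ∑ k ∈ range K, u k ≤ e 0 + ∑ k ∈ range K, D k := by
  calc ∑ k ∈ range K, u k ≤ ∑ k ∈ range K, (e k - e (k + 1) + D k) := sum_le_sum fun k _ => h k
    _ = e 0 - e K + ∑ k ∈ range K, D k := by rw [sum_add_distrib, sum_range_sub']
    _ ≤ e 0 + ∑ k ∈ range K, D k := by linarith

section Convolution

variable {β : ℕ → ℝ} {q : ℝ}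

theorem sum_mul_sum_geom_mul_le (hβ : Antitone β) (hβ0 : ∀ k, 0 ≤ β k) (hq0 : 0 ≤ q) (hq1 : q < 1)
    (K : ℕ) :
    ∑ k ∈ range K, β k * ∑ s ∈ range (k + 1), q ^ (k - s) * β s ≤
      (1 - q)⁻¹ * ∑ k ∈ range K, β k ^ 2 := by
  calc ∑ k ∈ range K, β k * ∑ s ∈ range (k + 1), q ^ (k - s) * β s
      ≤ ∑ k ∈ range K, ∑ s ∈ range (k + 1), q ^ (k - s) * β s ^ 2 := by
        refine sum_le_sum fun k _ => ?_
        rw [mul_sum]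
        refine sum_le_sum fun s hs => ?_
        have hsk : β k ≤ β s := hβ (mem_range_succ_iff.mp hs)
        have hq : 0 ≤ q ^ (k - s) * β s := mul_nonneg (pow_nonneg hq0 _) (hβ0 s)
        nlinarith [mul_le_mul_of_nonneg_right hsk hq]
    _ = ∑ s ∈ range K, (∑ j ∈ range (K - s), q ^ j) * β s ^ 2 := by
        rw [sum_comm' (t' := range K) (s' := fun s => Ico s K)]
        · refine sum_congr rfl fun s _ => ?_
          rw [← sum_mul, sum_Ico_eq_sum_range]
          simp only [Nat.add_sub_cancel_left]
        · intro k s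
          simp only [mem_range, mem_Ico]
          omega
    _ ≤ ∑ s ∈ range K, (1 - q)⁻¹ * β s ^ 2 :=
        sum_le_sum fun s _ =>
          mul_le_mul_of_nonneg_right (geom_sum_le_inv_one_sub hq0 hq1 _) (sq_nonneg _)
    _ = (1 - q)⁻¹ * ∑ k ∈ range K, β k ^ 2 := (mul_sum _ _ _).symm

theorem sum_mul_le_of_le_geom_add_conv (hβ : Antitone β) (hβ0 : ∀ k, 0 ≤ β k) (hq0 : 0 ≤ q)
    (hq1 : q < 1) {N : ℕ → ℝ} {c c' : ℝ} (hc : 0 ≤ c) (hc' : 0 ≤ c')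
    (hN : ∀ k, N k ≤ c * q ^ k + c' * ∑ s ∈ range (k + 1), q ^ (k - s) * β s) (K : ℕ) :
    ∑ k ∈ range K, β k * N k ≤ (1 - q)⁻¹ * (c * β 0 + c' * ∑ k ∈ range K, β k ^ 2) := by
  have hterm : ∀ k, β k * N k ≤
      c * β 0 * q ^ k + c' * (β k * ∑ s ∈ range (k + 1), q ^ (k - s) * β s) := by
    intro k
    have hβk : β k * (c * q ^ k) ≤ β 0 * (c * q ^ k) :=
      mul_le_mul_of_nonneg_right (hβ k.zero_le) (mul_nonneg hc (pow_nonneg hq0 k))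
    nlinarith [mul_le_mul_of_nonneg_left (hN k) (hβ0 k)]
  calc ∑ k ∈ range K, β k * N k
      ≤ c * β 0 * ∑ k ∈ range K, q ^ k +
          c' * ∑ k ∈ range K, β k * ∑ s ∈ range (k + 1), q ^ (k - s) * β s := by
        rw [mul_sum, mul_sum, ← sum_add_distrib]
        exact sum_le_sum fun k _ => hterm k
    _ ≤ c * β 0 * (1 - q)⁻¹ + c' * ((1 - q)⁻¹ * ∑ k ∈ range K, β k ^ 2) := by
        gcongr
        · exact mul_nonneg hc (hβ0 0)
        · exact geom_sum_le_inv_one_sub hq0 hq1 K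
        · exact sum_mul_sum_geom_mul_le hβ hβ0 hq0 hq1 K
    _ = (1 - q)⁻¹ * (c * β 0 + c' * ∑ k ∈ range K, β k ^ 2) := by ring

end Convolution

section RpowSchedule

variable {B θ : ℝ}

theorem antitone_div_rpow_natCast_add_one (hB : 0 ≤ B) (hθ : 0 ≤ θ) :
    Antitone fun k : ℕ => B / ((k : ℝ) + 1) ^ θ := by
  intro j k hjk
  dsimp only
  gcongr

theorem summable_sq_div_rpow_natCast_add_one (hθ : 1 / 2 < θ) :
    Summable fun k : ℕ => (B / ((k : ℝ) + 1) ^ θ) ^ 2 := by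
  have h : Summable fun k : ℕ => (((k + 1 : ℕ) : ℝ) ^ (2 * θ))⁻¹ :=
    (summable_nat_add_iff 1).mpr (Real.summable_nat_rpow_inv.mpr (by linarith))
  refine (h.mul_left (B ^ 2)).congr fun k => ?_
  push_cast
  rw [div_pow, ← Real.rpow_mul_natCast (by positivity), div_eq_mul_inv]
  norm_num [mul_comm θ 2]

theorem mean_le_of_two_mul_sum_div_rpow_mul_le {K : ℕ} (hK : 1 ≤ K) {μ E : ℝ} (hμ : 0 < μ)
    (hB : 0 < B) (hθ : 0 ≤ θ) {e : ℕ → ℝ} (he : ∀ k, 0 ≤ e k)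
    (h : 2 * μ * ∑ k ∈ range K, B / ((k : ℝ) + 1) ^ θ * e k ≤ E) :
    1 / (K : ℝ) * ∑ k ∈ range K, e k ≤ E / (2 * μ * B * (K : ℝ) ^ (1 - θ)) := by
  have hK' : (0 : ℝ) < K := by exact_mod_cast hK
  have hlow : B / (K : ℝ) ^ θ * ∑ k ∈ range K, e k ≤
      ∑ k ∈ range K, B / ((k : ℝ) + 1) ^ θ * e k := by
    rw [mul_sum]
    refine sum_le_sum fun k hk => mul_le_mul_of_nonneg_right ?_ (he k)
    have hkK : (k : ℝ) + 1 ≤ K := by exact_mod_cast mem_range.mp hk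
    gcongr
  rw [Real.rpow_sub hK', Real.rpow_one, le_div_iff₀ (by positivity)]
  calc (1 / (K : ℝ) * ∑ k ∈ range K, e k) * (2 * μ * B * (K / K ^ θ))
      = 2 * μ * (B / (K : ℝ) ^ θ * ∑ k ∈ range K, e k) := by field_simp
    _ ≤ E := le_trans (by gcongr) h

end RpowSchedule

theorem norm_sum_le_card_mul {E : Type*} [SeminormedAddCommGroup E] {n : ℕ} {v : Fin n → E} {L : ℝ}
    (hv : ∀ i, ‖v i‖ ≤ L) :
    ‖∑ i, v i‖ ≤ n * L :=
  (norm_sum_le_of_le _ fun i _ => hv i).trans (by simp)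

theorem ConvexOn.add_apply_sub_le_of_hasFDerivAt {E : Type*} [NormedAddCommGroup E]
    [NormedSpace ℝ E] {g : E → ℝ} {g' : E →L[ℝ] ℝ} {x : E}
    (hc : ConvexOn ℝ Set.univ g) (hg : HasFDerivAt g g' x) (y : E) :
    g x + g' (y - x) ≤ g y := by
  have hline : ConvexOn ℝ Set.univ (g ∘ AffineMap.lineMap (k := ℝ) x y) := by
    have := hc.comp_affineMap (AffineMap.lineMap x y)
    rwa [Set.preimage_univ] at this
  have hderiv : HasDerivAt (g ∘ AffineMap.lineMap (k := ℝ) x y) (g' (y - x)) 0 :=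
    hg.comp_hasDerivAt_of_eq 0 AffineMap.hasStrictDerivAt_lineMap.hasDerivAt (by simp)
  have := hline.le_slope_of_hasDerivAt (Set.mem_univ 0) (Set.mem_univ 1) one_pos hderiv
  simp only [slope_def_field, Function.comp_apply, AffineMap.lineMap_apply_zero,
    AffineMap.lineMap_apply_one, sub_zero, div_one] at this
  linarith

section Gradient

variable {E : Type*} [NormedAddCommGroup E] [InnerProductSpace ℝ E]

theorem norm_sub_smul_sub_sq_le {x y g : E} {β c L : ℝ} (hβ : 0 ≤ β) (hg : ‖g‖ ≤ L)
    (hc : c ≤ ⟪g, x - y⟫) : ‖x - β • g - y‖ ^ 2 ≤ ‖x - y‖ ^ 2 - 2 * β * c + β ^ 2 * L ^ 2 := by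
  rw [sub_right_comm, norm_sub_sq_real, real_inner_smul_right, norm_smul, Real.norm_of_nonneg hβ,
    mul_pow, real_inner_comm]
  have hg2 : ‖g‖ ^ 2 ≤ L ^ 2 := pow_le_pow_left₀ (norm_nonneg g) hg 2
  nlinarith [mul_le_mul_of_nonneg_left hc hβ, mul_le_mul_of_nonneg_left hg2 (sq_nonneg β)]

variable [CompleteSpace E] {μ : ℝ}

section

variable {f : E → ℝ}

theorem add_inner_gradient_add_sq_le (hc : ConvexOn ℝ Set.univ (fun x => f x - μ / 2 * ‖x‖ ^ 2))
    {x : E} (hf : DifferentiableAt ℝ f x) (y : E) :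
    f x + ⟪gradient f x, y - x⟫ + μ / 2 * ‖y - x‖ ^ 2 ≤ f y := by
  have hquad := (hasStrictFDerivAt_norm_sq x).hasFDerivAt.const_mul (μ / 2)
  have := hc.add_apply_sub_le_of_hasFDerivAt (hf.hasFDerivAt.sub hquad) y
  simp only [sub_apply, smul_apply, innerSL_apply_apply,
    ← inner_gradient_left, smul_eq_mul, nsmul_eq_mul, Nat.cast_ofNat, inner_sub_right,
    real_inner_self_eq_norm_sq] at this
  rw [norm_sub_sq_real, inner_sub_right, real_inner_comm x y]
  linarith

theorem inner_gradient_sub_gradient_ge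
    (hc : ConvexOn ℝ Set.univ (fun x => f x - μ / 2 * ‖x‖ ^ 2)) (hf : Differentiable ℝ f)
    (x y : E) : μ * ‖x - y‖ ^ 2 ≤ ⟪gradient f x - gradient f y, x - y⟫ := by
  have hxy := add_inner_gradient_add_sq_le hc (hf x) y
  have hyx := add_inner_gradient_add_sq_le hc (hf y) x
  rw [← neg_sub x y, inner_neg_right, norm_neg] at hxy
  rw [inner_sub_left]
  linarith

end

theorem sum_gradient_eq_zero_of_forall_sum_le {ι : Type*} [Fintype ι] {f : ι → E → ℝ}
    (hf : ∀ i, Differentiable ℝ (f i)) {x : E} (hx : ∀ y, ∑ i, f i x ≤ ∑ i, f i y) :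
    ∑ i, gradient (f i) x = 0 := by
  have hF : HasFDerivAt (fun y => ∑ i, f i y)
      (∑ i, InnerProductSpace.toDual ℝ E (gradient (f i) x)) x :=
    HasFDerivAt.fun_sum fun i _ => ((hf i) x).hasGradientAt.hasFDerivAt
  have hmin : IsLocalMin (fun y => ∑ i, f i y) x := Filter.Eventually.of_forall hx
  rw [← map_eq_zero_iff _ (InnerProductSpace.toDual ℝ E).injective, map_sum, ← hF.fderiv]
  exact hmin.fderiv_eq_zero

section

variable {n : ℕ} {f : Fin n → E → ℝ} {M L : ℝ}

theorem card_mul_le_inner_sum_gradient_sub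
    (hsc : ∀ i, ConvexOn ℝ Set.univ (fun x => f i x - μ / 2 * ‖x‖ ^ 2))
    (hf : ∀ i, Differentiable ℝ (f i)) (x y : E) :
    n * (μ * ‖x - y‖ ^ 2) ≤ ⟪∑ i, gradient (f i) x - ∑ i, gradient (f i) y, x - y⟫ := by
  rw [← sum_sub_distrib, sum_inner]
  calc (n : ℝ) * (μ * ‖x - y‖ ^ 2) = ∑ _i : Fin n, μ * ‖x - y‖ ^ 2 := by simp
    _ ≤ _ := sum_le_sum fun i _ => inner_gradient_sub_gradient_ge (hsc i) (hf i) x y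

theorem eq_of_forall_sum_le (hn : 0 < n) (hμ : 0 < μ)
    (hsc : ∀ i, ConvexOn ℝ Set.univ (fun x => f i x - μ / 2 * ‖x‖ ^ 2))
    (hf : ∀ i, Differentiable ℝ (f i)) {x y : E}
    (hx : ∀ w, ∑ i, f i x ≤ ∑ i, f i w) (hy : ∀ w, ∑ i, f i y ≤ ∑ i, f i w) : x = y := by
  have h := card_mul_le_inner_sum_gradient_sub hsc hf x y
  rw [sum_gradient_eq_zero_of_forall_sum_le hf hx, sum_gradient_eq_zero_of_forall_sum_le hf hy,
    sub_zero, inner_zero_left] at h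
  have : ‖x - y‖ ^ 2 ≤ 0 := nonpos_of_mul_nonpos_right
    (nonpos_of_mul_nonpos_right h (by exact_mod_cast hn)) hμ
  rw [← sub_eq_zero, ← norm_eq_zero]
  exact pow_eq_zero_iff two_ne_zero |>.mp (le_antisymm this (sq_nonneg _))

theorem norm_sub_le_div_of_norm_gradient_le (hn : 0 < n) (hμ : 0 < μ)
    (hsc : ∀ i, ConvexOn ℝ Set.univ (fun x => f i x - μ / 2 * ‖x‖ ^ 2))
    (hf : ∀ i, Differentiable ℝ (f i)) {xstar : E} (hxstar : ∑ i, gradient (f i) xstar = 0)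
    {x : E} (hL : ∀ i, ‖gradient (f i) x‖ ≤ L) : ‖x - xstar‖ ≤ L / μ := by
  have h := card_mul_le_inner_sum_gradient_sub hsc hf x xstar
  rw [hxstar, sub_zero] at h
  have h' := h.trans ((real_inner_le_norm _ _).trans
    (mul_le_mul_of_nonneg_right (norm_sum_le_card_mul hL) (norm_nonneg _)))
  have hn' : (0 : ℝ) < n := by exact_mod_cast hn
  rw [le_div_iff₀ hμ]
  rcases (norm_nonneg (x - xstar)).eq_or_lt with h0 | hpos
  · rw [← h0, zero_mul]
    exact (norm_nonneg _).trans (hL ⟨0, hn⟩)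
  · nlinarith [mul_pos hn' hpos]

theorem card_mul_sub_le_inner_sum_gradient
    (hsc : ∀ i, ConvexOn ℝ Set.univ (fun x => f i x - μ / 2 * ‖x‖ ^ 2))
    (hf : ∀ i, Differentiable ℝ (f i))
    (hlip : ∀ i x y, ‖gradient (f i) x - gradient (f i) y‖ ≤ M * ‖x - y‖)
    {xstar : E} (hxstar : ∑ i, gradient (f i) xstar = 0) {x : E} {R : ℝ} (hR : ‖x - xstar‖ ≤ R)
    (z : Fin n → E) :
    n * (μ * ‖x - xstar‖ ^ 2) - M * R * ∑ i, ‖z i - x‖ ≤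
      ⟪∑ i, gradient (f i) (z i), x - xstar⟫ := by
  have hterm : ∀ i, μ * ‖x - xstar‖ ^ 2 - M * R * ‖z i - x‖ ≤
      ⟪gradient (f i) (z i), x - xstar⟫ - ⟪gradient (f i) xstar, x - xstar⟫ := by
    intro i
    have hmono := inner_gradient_sub_gradient_ge (hsc i) (hf i) x xstar
    have hdev : ‖gradient (f i) (z i) - gradient (f i) x‖ * ‖x - xstar‖ ≤ M * ‖z i - x‖ * R :=
      mul_le_mul (hlip i _ _) hR (norm_nonneg _) ((norm_nonneg _).trans (hlip i _ _))
    have hdev' := neg_le_of_abs_le ((abs_real_inner_le_norm _ _).trans hdev)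
    rw [inner_sub_left] at hmono hdev'
    linarith
  have hsum := sum_le_sum fun i (_ : i ∈ univ) => hterm i
  rw [sum_sub_distrib, sum_sub_distrib, ← sum_inner, ← sum_inner, hxstar, inner_zero_left,
    sub_zero, sum_const, card_univ, Fintype.card_fin, nsmul_eq_mul, ← mul_sum] at hsum
  exact hsum

theorem two_mul_mul_sq_dist_le_of_step (hn : 0 < n) (hμ : 0 < μ)
    (hsc : ∀ i, ConvexOn ℝ Set.univ (fun x => f i x - μ / 2 * ‖x‖ ^ 2))
    (hf : ∀ i, Differentiable ℝ (f i))
    (hlip : ∀ i x y, ‖gradient (f i) x - gradient (f i) y‖ ≤ M * ‖x - y‖)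
    {xstar : E} (hxstar : ∑ i, gradient (f i) xstar = 0) {x : E} {z : Fin n → E} {β : ℝ}
    (hβ : 0 ≤ β) (hgradz : ∀ i, ‖gradient (f i) (z i)‖ ≤ L)
    (hgradx : ∀ i, ‖gradient (f i) x‖ ≤ L) :
    2 * μ * β * ‖x - xstar‖ ^ 2 ≤
      ‖x - xstar‖ ^ 2 - ‖x - (n : ℝ)⁻¹ • ∑ i, β • gradient (f i) (z i) - xstar‖ ^ 2 +
        β * (2 * M * (L / μ) * ((n : ℝ)⁻¹ * ∑ i, ‖z i - x‖) + β * L ^ 2) := by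
  have hn' : (0 : ℝ) < n := by exact_mod_cast hn
  have hR := norm_sub_le_div_of_norm_gradient_le hn hμ hsc hf hxstar hgradx
  have hinner := card_mul_sub_le_inner_sum_gradient hsc hf hlip hxstar hR z
  set g := (n : ℝ)⁻¹ • ∑ i, gradient (f i) (z i)
  have hg : ‖g‖ ≤ L := by
    rw [norm_smul, norm_inv, Real.norm_natCast, inv_mul_le_iff₀ hn']
    exact norm_sum_le_card_mul hgradz
  have hc : μ * ‖x - xstar‖ ^ 2 - M * (L / μ) * ((n : ℝ)⁻¹ * ∑ i, ‖z i - x‖) ≤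
      ⟪g, x - xstar⟫ :=
    calc _ = (n : ℝ)⁻¹ * (n * (μ * ‖x - xstar‖ ^ 2) - M * (L / μ) * ∑ i, ‖z i - x‖) := by
          field_simp
      _ ≤ (n : ℝ)⁻¹ * ⟪∑ i, gradient (f i) (z i), x - xstar⟫ :=
          mul_le_mul_of_nonneg_left hinner (by positivity)
      _ = ⟪g, x - xstar⟫ := (real_inner_smul_left _ _ _).symm
  have hstep := norm_sub_smul_sub_sq_le hβ hg hc
  rw [← smul_sum, smul_comm]
  linarith

theorem exists_two_mul_sum_mul_sq_dist_le (hn : 0 < n) {C q : ℝ} (hμ : 0 < μ)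
    (hM : 0 ≤ M) (hL : 0 ≤ L) (hC : 0 ≤ C) (hq0 : 0 ≤ q) (hq1 : q < 1)
    (hsc : ∀ i, ConvexOn ℝ Set.univ (fun x => f i x - μ / 2 * ‖x‖ ^ 2))
    (hf : ∀ i, Differentiable ℝ (f i))
    (hlip : ∀ i x y, ‖gradient (f i) x - gradient (f i) y‖ ≤ M * ‖x - y‖)
    {xstar : E} (hxstar : ∑ i, gradient (f i) xstar = 0)
    {β : ℕ → ℝ} (hβ : Antitone β) (hβ0 : ∀ k, 0 ≤ β k) (hβsq : Summable fun k => β k ^ 2)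
    {z : Fin n → ℕ → E} {xbar : ℕ → E}
    (hrec : ∀ k, xbar (k + 1) = xbar k - (n : ℝ)⁻¹ • ∑ i, β k • gradient (f i) (z i k))
    (hgradz : ∀ i k, ‖gradient (f i) (z i k)‖ ≤ L)
    (hgradx : ∀ i k, ‖gradient (f i) (xbar k)‖ ≤ L) {a : Fin n → ℝ} (ha : ∀ i, 0 ≤ a i)
    (hcons : ∀ i k, ‖z i k - xbar k‖ ≤
      C * q ^ k * a i + C * L * ∑ s ∈ range (k + 1), q ^ (k - s) * β s) :
    ∃ A, 0 < A ∧ ∀ K, 2 * μ * ∑ k ∈ range K, β k * ‖xbar k - xstar‖ ^ 2 ≤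
      ‖xbar 0 - xstar‖ ^ 2 + A := by
  set e : ℕ → ℝ := fun k => ‖xbar k - xstar‖ ^ 2
  set N : ℕ → ℝ := fun k => ∑ i, ‖z i k - xbar k‖
  set S := ∑' k, β k ^ 2
  set D := 2 * M * (L / μ) * (n : ℝ)⁻¹
  have hS : ∀ K, ∑ k ∈ range K, β k ^ 2 ≤ S := fun K =>
    hβsq.sum_le_tsum _ fun k _ => sq_nonneg _
  have hstep : ∀ k, 2 * μ * (β k * e k) ≤
      e k - e (k + 1) + (D * (β k * N k) + L ^ 2 * β k ^ 2) := by
    intro k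
    have h := two_mul_mul_sq_dist_le_of_step hn hμ hsc hf hlip hxstar (hβ0 k) (hgradz · k)
      (hgradx · k)
    rw [← hrec] at h
    linear_combination h
  have hN : ∀ k, N k ≤ (C * ∑ i, a i) * q ^ k +
      (n * (C * L)) * ∑ s ∈ range (k + 1), q ^ (k - s) * β s := by
    intro k
    refine (sum_le_sum fun i _ => hcons i k).trans_eq ?_
    simp only [sum_add_distrib, ← sum_mul, ← mul_sum, sum_const, card_univ, Fintype.card_fin,
      nsmul_eq_mul]
    ring
  have hsa : 0 ≤ ∑ i, a i := sum_nonneg fun i _ => ha i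
  have h1q : 0 ≤ (1 - q)⁻¹ := inv_nonneg.2 (by linarith)
  have hS0 : 0 ≤ S := tsum_nonneg fun k => sq_nonneg _
  have hc : 0 ≤ C * ∑ i, a i := mul_nonneg hC hsa
  have hc' : 0 ≤ n * (C * L) := mul_nonneg n.cast_nonneg (mul_nonneg hC hL)
  have hD : 0 ≤ D := mul_nonneg (mul_nonneg (mul_nonneg zero_le_two hM) (div_nonneg hL hμ.le))
    (inv_nonneg.2 n.cast_nonneg)
  have herr := sum_mul_le_of_le_geom_add_conv hβ hβ0 hq0 hq1 hc hc' hN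
  have hE : 0 ≤ D * ((1 - q)⁻¹ * ((C * ∑ i, a i) * β 0 + n * (C * L) * S)) + L ^ 2 * S :=
    add_nonneg (mul_nonneg hD (mul_nonneg h1q (add_nonneg (mul_nonneg hc (hβ0 0))
      (mul_nonneg hc' hS0)))) (mul_nonneg (sq_nonneg L) hS0)
  refine ⟨D * ((1 - q)⁻¹ * ((C * ∑ i, a i) * β 0 + n * (C * L) * S)) + L ^ 2 * S + 1,
    by linarith, fun K => ?_⟩
  have hNK : ∑ k ∈ range K, β k * N k ≤ (1 - q)⁻¹ * ((C * ∑ i, a i) * β 0 + n * (C * L) * S) :=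
    (herr K).trans (by gcongr; exact hS K)
  calc 2 * μ * ∑ k ∈ range K, β k * e k = ∑ k ∈ range K, 2 * μ * (β k * e k) := mul_sum _ _ _
    _ ≤ e 0 + ∑ k ∈ range K, (D * (β k * N k) + L ^ 2 * β k ^ 2) :=
        sum_range_le_add_sum_of_le_sub_succ hstep (sq_nonneg _)
    _ = e 0 + (D * ∑ k ∈ range K, β k * N k + L ^ 2 * ∑ k ∈ range K, β k ^ 2) := by
        rw [sum_add_distrib, mul_sum, mul_sum]
    _ ≤ _ := by
        linarith [mul_le_mul_of_nonneg_left hNK hD, mul_le_mul_of_nonneg_left (hS K) (sq_nonneg L)]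

end

end Gradient

theorem stmt_13_general
    {n d : ℕ} (hn : 1 ≤ n)
    {μ M : ℝ} (hμ : 0 < μ) (hμM : μ ≤ M)
    (f : Fin n → EuclideanSpace ℝ (Fin d) → ℝ)
    (hdiff : ∀ i, Differentiable ℝ (f i))
    (hsc : ∀ i, ConvexOn ℝ Set.univ (fun x => f i x - μ / 2 * ‖x‖ ^ 2))
    (hlip : ∀ i x y, ‖gradient (f i) x - gradient (f i) y‖ ≤ M * ‖x - y‖)
    (xstar : EuclideanSpace ℝ (Fin d))
    (hxstar : ∀ y, ∑ i, f i xstar ≤ ∑ i, f i y)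
    {θ B : ℝ} (hθ : θ ∈ Set.Ioo (1/2 : ℝ) 1) (hB : 0 < B)
    (δ : Fin n → ℕ → ℕ) (hδ : ∀ i k, δ i k = 1)
    (α : Fin n → ℕ → ℝ) (hα : ∀ i k, α i k = B / ((k : ℝ) + 1) ^ θ)
    (z : Fin n → ℕ → EuclideanSpace ℝ (Fin d))
    (xbar : ℕ → EuclideanSpace ℝ (Fin d))
    (hrec : ∀ k, xbar (k + 1) =
      xbar k - ((n : ℝ))⁻¹ • ∑ i, (α i k * (δ i k : ℝ)) • gradient (f i) (z i k))
    (L : ℝ) (hL : 0 < L)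
    (hgradz : ∀ i k, ‖gradient (f i) (z i k)‖ ≤ L)
    (hgradx : ∀ i k, ‖gradient (f i) (xbar k)‖ ≤ L)
    (C q : ℝ) (hC : 0 < C) (hq : q ∈ Set.Ioo (0:ℝ) 1)
    (a : Fin n → ℝ) (ha : ∀ i, 0 ≤ a i)
    (hcons : ∀ i k, ‖z i k - xbar k‖ ≤
      C * q ^ k * a i +
        C * L * ∑ s ∈ Finset.range (k + 1), q ^ (k - s) * (α i s * (δ i s : ℝ))) :
    (∀ K : ℕ, 1 ≤ K → ∀ i,
      (∑ k ∈ Finset.range K, α i k * (δ i k : ℝ)) /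
        (∑ j, ∑ k ∈ Finset.range K, α j k * (δ j k : ℝ)) = 1 / (n : ℝ)) ∧
    (∀ K : ℕ, 1 ≤ K → ∀ xK : EuclideanSpace ℝ (Fin d),
      (∀ y, ∑ i, ((∑ k ∈ Finset.range K, α i k * (δ i k : ℝ)) /
              (∑ j, ∑ k ∈ Finset.range K, α j k * (δ j k : ℝ))) * f i xK ≤
            ∑ i, ((∑ k ∈ Finset.range K, α i k * (δ i k : ℝ)) /
              (∑ j, ∑ k ∈ Finset.range K, α j k * (δ j k : ℝ))) * f i y) →
      xK = xstar) ∧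
    ∃ A : ℝ, 0 < A ∧
      ∀ K : ℕ, 1 ≤ K →
        (1 / (K : ℝ)) * ∑ k ∈ Finset.range K, ‖xbar k - xstar‖ ^ 2 ≤
          (n : ℝ) * (‖xbar 0 - xstar‖ ^ 2 + A) / (2 * μ * B * (K : ℝ) ^ (1 - θ)) := by
  have hθ0 : 0 ≤ θ := by linarith [hθ.1]
  set β : ℕ → ℝ := fun k => B / ((k : ℝ) + 1) ^ θ
  have hαδ : ∀ i k, α i k * (δ i k : ℝ) = β k := fun i k => by simp [hα, hδ, β]
  have hβ0 : ∀ k, 0 ≤ β k := fun k => by positivity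
  have hweight : ∀ K : ℕ, 1 ≤ K → ∀ i, (∑ k ∈ range K, α i k * (δ i k : ℝ)) /
      (∑ j, ∑ k ∈ range K, α j k * (δ j k : ℝ)) = 1 / (n : ℝ) := by
    intro K hK i
    have hpos : 0 < ∑ k ∈ range K, β k :=
      sum_pos (fun k _ => by positivity) (nonempty_range_iff.2 (by omega))
    simp only [hαδ, sum_const, card_univ, Fintype.card_fin, nsmul_eq_mul]
    field_simp
  refine ⟨hweight, fun K hK xK hxK => ?_, ?_⟩
  · simp only [hweight K hK, ← mul_sum] at hxK
    exact eq_of_forall_sum_le hn hμ hsc hdiff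
      (fun y => le_of_mul_le_mul_left (hxK y) (by positivity)) hxstar
  · obtain ⟨A, hA, hdesc⟩ := exists_two_mul_sum_mul_sq_dist_le hn hμ (hμ.le.trans hμM) hL.le
      hC.le hq.1.le hq.2 hsc hdiff hlip (sum_gradient_eq_zero_of_forall_sum_le hdiff hxstar)
      (antitone_div_rpow_natCast_add_one hB.le hθ0) hβ0
      (summable_sq_div_rpow_natCast_add_one hθ.1) (by simpa only [hαδ] using hrec) hgradz hgradx
      ha (by simpa only [hαδ] using hcons)
    refine ⟨A, hA, fun K hK => ?_⟩
    calc _ ≤ (‖xbar 0 - xstar‖ ^ 2 + A) / (2 * μ * B * (K : ℝ) ^ (1 - θ)) :=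
          mean_le_of_two_mul_sum_div_rpow_mul_le hK hμ hB hθ0 (fun k => sq_nonneg _) (hdesc K)
      _ ≤ _ := by
          rw [mul_div_assoc]
          exact le_mul_of_one_le_left (by positivity) (by exact_mod_cast hn)

/-- Corollary (semi-synchronous gradient push, diminishing step-size): with all agents
active at every index and `α_i[k] = B/(k+1)^θ`, the weights satisfy `p̄_i^{(K)} = 1/n`,
the minimizer of the reweighted objective equals `x*`, and there exists `A > 0` with
`(1/K) ∑_{k<K} ‖x̄[k] − x*‖² ≤ n(‖x̄[0] − x*‖² + A)/(2μB K^{1−θ})` for all `K ≥ 1`. -/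
theorem stmt_13
    {n d : ℕ} (hn : 1 ≤ n) (hd : 1 ≤ d)
    {μ M : ℝ} (hμ : 0 < μ) (hμM : μ ≤ M)
    (f : Fin n → EuclideanSpace ℝ (Fin d) → ℝ)
    (hdiff : ∀ i, Differentiable ℝ (f i))
    (hsc : ∀ i, ConvexOn ℝ Set.univ (fun x => f i x - μ / 2 * ‖x‖ ^ 2))
    (hlip : ∀ i x y, ‖gradient (f i) x - gradient (f i) y‖ ≤ M * ‖x - y‖)
    (xstar : EuclideanSpace ℝ (Fin d))
    (hxstar : ∀ y, ∑ i, f i xstar ≤ ∑ i, f i y)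
    {θ B : ℝ} (hθ : θ ∈ Set.Ioo (1/2 : ℝ) 1) (hB : 0 < B)
    (δ : Fin n → ℕ → ℕ) (hδ : ∀ i k, δ i k = 1)
    (α : Fin n → ℕ → ℝ) (hα : ∀ i k, α i k = B / ((k : ℝ) + 1) ^ θ)
    (z : Fin n → ℕ → EuclideanSpace ℝ (Fin d))
    (xbar : ℕ → EuclideanSpace ℝ (Fin d))
    (hrec : ∀ k, xbar (k + 1) =
      xbar k - ((n : ℝ))⁻¹ • ∑ i, (α i k * (δ i k : ℝ)) • gradient (f i) (z i k))
    (L : ℝ) (hL : 0 < L)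
    (hgradz : ∀ i k, ‖gradient (f i) (z i k)‖ ≤ L)
    (hgradx : ∀ i k, ‖gradient (f i) (xbar k)‖ ≤ L)
    (C q : ℝ) (hC : 0 < C) (hq : q ∈ Set.Ioo (0:ℝ) 1)
    (a : Fin n → ℝ) (ha : ∀ i, 0 ≤ a i)
    (hcons : ∀ i k, ‖z i k - xbar k‖ ≤
      C * q ^ k * a i +
        C * L * ∑ s ∈ Finset.range (k + 1), q ^ (k - s) * (α i s * (δ i s : ℝ))) :
    (∀ K : ℕ, 1 ≤ K → ∀ i,
      (∑ k ∈ Finset.range K, α i k * (δ i k : ℝ)) /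
        (∑ j, ∑ k ∈ Finset.range K, α j k * (δ j k : ℝ)) = 1 / (n : ℝ)) ∧
    (∀ K : ℕ, 1 ≤ K → ∀ xK : EuclideanSpace ℝ (Fin d),
      (∀ y, ∑ i, ((∑ k ∈ Finset.range K, α i k * (δ i k : ℝ)) /
              (∑ j, ∑ k ∈ Finset.range K, α j k * (δ j k : ℝ))) * f i xK ≤
            ∑ i, ((∑ k ∈ Finset.range K, α i k * (δ i k : ℝ)) /
              (∑ j, ∑ k ∈ Finset.range K, α j k * (δ j k : ℝ))) * f i y) →
      xK = xstar) ∧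
    ∃ A : ℝ, 0 < A ∧
      ∀ K : ℕ, 1 ≤ K →
        (1 / (K : ℝ)) * ∑ k ∈ Finset.range K, ‖xbar k - xstar‖ ^ 2 ≤
          (n : ℝ) * (‖xbar 0 - xstar‖ ^ 2 + A) / (2 * μ * B * (K : ℝ) ^ (1 - θ)) :=
  stmt_13_general hn hμ hμM f hdiff hsc hlip xstar hxstar hθ hB δ hδ α hα z xbar hrec L hL hgradz
    hgradx C q hC hq a ha hcons
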